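/- arXiv:2211.08994 — 2 statements merged into one kernel-verified Lean document; each statement's English description precedes it below -/
import Mathlib

section
/- If A ⊆ ℕ is an IP* set and m ∈ ℕ, then the dilated set m·A = { m·a : a ∈ A } is also an IP* set. -/
/-- `FS ⟨xₙ⟩` : all finite sums `Σ_{t ∈ H} x_t` over nonempty finite `H ⊆ ℕ`. -/
def FS (x : ℕ → ℕ) : Set ℕ :=
  { y | ∃ H : Finset ℕ, H.Nonempty ∧ y = ∑ t ∈ H, x t }

/-- `S` is an IP set (in the positive integers) if it contains `FS ⟨xₙ⟩` for some
sequence of positive integers `⟨xₙ⟩`. -/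
def IPSet (S : Set ℕ) : Prop :=
  ∃ x : ℕ → ℕ, (∀ n, 0 < x n) ∧ FS x ⊆ S

/-- `A` is IP* if it meets every IP set. -/
def IPStar (A : Set ℕ) : Prop :=
  ∀ S : Set ℕ, IPSet S → (A ∩ S).Nonempty

/-!
Given an IP set containing `FS ⟨xₙ⟩`, the partial sums `x₀ + ⋯ + x_{k-1}` take
some residue modulo `m` infinitely often, at indices `e₀ < e₁ < ⋯`. The blocks
`x_{e_k} + ⋯ + x_{e_{k+1}-1}` are then positive multiples `m zₖ` of `m`, and every finite sum
of blocks is a finite sum of the `xₙ`. So `FS ⟨zₙ⟩ ⊆ {a | m a ∈ S}`, and an IP* set `A` meets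
it in some `a`, giving `m a ∈ m·A ∩ S`.
-/

open Finset

theorem exists_strictMono_comp_eq_const {β : Type*} [Finite β] (f : ℕ → β) :
    ∃ e : ℕ → ℕ, StrictMono e ∧ ∃ b, ∀ k, f (e k) = b := by
  obtain ⟨b, hb⟩ := Finite.exists_infinite_fiber f
  obtain ⟨e, he, hfe⟩ := Filter.extraction_of_frequently_atTop
    (Nat.frequently_atTop_iff_infinite.mpr (Set.infinite_coe_iff.mp hb))
  exact ⟨e, he, b, hfe⟩

def blockSum (x e : ℕ → ℕ) (k : ℕ) : ℕ :=
  ∑ t ∈ Ico (e k) (e (k + 1)), x t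

section blockSum

variable {x e : ℕ → ℕ}

theorem sum_range_add_blockSum (he : Monotone e) (k : ℕ) :
    ∑ t ∈ range (e k), x t + blockSum x e k = ∑ t ∈ range (e (k + 1)), x t :=
  sum_range_add_sum_Ico x (he k.le_succ)

theorem blockSum_pos (hx : ∀ n, 0 < x n) (he : StrictMono e) (k : ℕ) : 0 < blockSum x e k :=
  sum_pos (fun t _ => hx t) (nonempty_Ico.mpr (he k.lt_succ_self))

theorem FS_blockSum_subset (he : StrictMono e) : FS (blockSum x e) ⊆ FS x := by
  rintro _ ⟨H, ⟨k, hk⟩, rfl⟩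
  refine ⟨H.biUnion fun k => Ico (e k) (e (k + 1)), ⟨e k, ?_⟩, ?_⟩
  · exact mem_biUnion.mpr ⟨k, hk, left_mem_Ico.mpr (he k.lt_succ_self)⟩
  · rw [sum_biUnion]
    · rfl
    · intro a _ b _ hab
      rw [Function.onFun, ← disjoint_coe, coe_Ico, coe_Ico]
      exact he.monotone.pairwise_disjoint_on_Ico_succ hab

end blockSum

theorem mul_mem_FS_of_dvd {y : ℕ → ℕ} {m : ℕ} (hy : ∀ k, m ∣ y k) {a : ℕ}
    (ha : a ∈ FS fun k => y k / m) : m * a ∈ FS y := by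
  obtain ⟨H, hH, rfl⟩ := ha
  refine ⟨H, hH, ?_⟩
  rw [mul_sum]
  exact sum_congr rfl fun k _ => Nat.mul_div_cancel' (hy k)

theorem IPSet.preimage_mul_left {S : Set ℕ} (hS : IPSet S) {m : ℕ} (hm : 0 < m) :
    IPSet ((fun a => m * a) ⁻¹' S) := by
  obtain ⟨x, hx, hxS⟩ := hS
  have : NeZero m := ⟨hm.ne'⟩
  obtain ⟨e, he, r, her⟩ :=
    exists_strictMono_comp_eq_const fun k => ((∑ t ∈ range k, x t : ℕ) : ZMod m)
  have hdvd : ∀ k, m ∣ blockSum x e k := by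
    intro k
    have hsum := congrArg (Nat.cast : ℕ → ZMod m) (sum_range_add_blockSum (x := x) he.monotone k)
    rwa [Nat.cast_add, her, her, add_eq_left, ZMod.natCast_eq_zero_iff] at hsum
  refine ⟨fun k => blockSum x e k / m, fun k => ?_, fun a ha => ?_⟩
  · exact Nat.div_pos (Nat.le_of_dvd (blockSum_pos hx he k) (hdvd k)) hm
  · exact hxS (FS_blockSum_subset he (mul_mem_FS_of_dvd hdvd ha))

/-- If `A ⊆ ℕ` is an IP* set and `m` is a positive integer, then the dilate
`m·A = {m·a : a ∈ A}` is also an IP* set. -/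
theorem IPStar_smul (A : Set ℕ) (hA : IPStar A) (m : ℕ) (hm : 0 < m) :
    IPStar ((fun a => m * a) '' A) := by
  intro S hS
  obtain ⟨a, haA, haS⟩ := hA _ (hS.preimage_mul_left hm)
  exact ⟨m * a, Set.mem_image_of_mem _ haA, haS⟩
end

section
/- Let (X, μ, T) be an invertible measure-preserving system and A ⊆ X a measurable set with μ(A) > 0. Then the return times set R(A) = { n ∈ ℤ : μ(A ∩ T⁻ⁿA) > 0 } is an IP_r* set, where r = ⌊1/μ(A)⌋ + 1: that is, for any x₁, …, x_r ∈ ℤ, some nonempty subset H ⊆ {1, …, r} satisfies Σ_{t∈H} x_t ∈ R(A). -/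
/-!
With partial sums `S₀ = 0, Sⱼ = x₁ + ⋯ + xⱼ`, the `r` translates `T^{-Sⱼ} A`, `0 ≤ j < r`, all
have measure `μ(A)` and `r μ(A) > 1`, so two of them, say for `i < j`, overlap in positive
measure. That overlap is a translate of `A ∩ T^{-(Sⱼ - Sᵢ)} A`, and `Sⱼ - Sᵢ` is the sum of `x_t`
over `H = (i, j]`.
-/

open MeasureTheory

/-- The return times set of a measurable set `A` under the `ℤ`-action generated by an
invertible map `T` : `R(A) = { n ∈ ℤ : μ(A ∩ T⁻ⁿ A) > 0 }`, where `T⁻ⁿ A = (Tⁿ)⁻¹ A`. -/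
def returnTimes {X : Type*} [MeasurableSpace X] (μ : Measure X) (T : Equiv.Perm X)
    (A : Set X) : Set ℤ :=
  { n : ℤ | 0 < μ (A ∩ (T ^ n) ⁻¹' A) }

namespace MeasureTheory

theorem exists_measure_inter_pos_of_measure_univ_lt_sum_measure {α ι : Type*}
    [MeasurableSpace α] (μ : Measure α) {s : Finset ι} {t : ι → Set α}
    (h : ∀ i ∈ s, NullMeasurableSet (t i) μ) (H : μ Set.univ < ∑ i ∈ s, μ (t i)) :
    ∃ i ∈ s, ∃ j ∈ s, i ≠ j ∧ 0 < μ (t i ∩ t j) := by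
  contrapose! H
  exact sum_measure_le_measure_univ h fun i hi j hj hij ↦ nonpos_iff_eq_zero.1 (H i hi j hj hij)

theorem MeasurePreserving.perm_zpow {X : Type*} [MeasurableSpace X] {μ : Measure X}
    {T : Equiv.Perm X} (hT : MeasurePreserving T μ μ) (hT' : MeasurePreserving T.symm μ μ) :
    ∀ n : ℤ, MeasurePreserving ⇑(T ^ n) μ μ
  | .ofNat n => by simpa [Equiv.Perm.coe_pow] using hT.iterate n
  | .negSucc n => by
    rw [zpow_negSucc, ← inv_pow, Equiv.Perm.coe_pow]
    exact hT'.iterate _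

end MeasureTheory

section returnTimes

variable {X : Type*} [MeasurableSpace X] {μ : Measure X} {T : Equiv.Perm X} {A : Set X}

theorem measure_preimage_zpow_inter_preimage_zpow (hT : ∀ n : ℤ, MeasurePreserving ⇑(T ^ n) μ μ)
    (hA : MeasurableSet A) (m n : ℤ) :
    μ ((T ^ m) ⁻¹' A ∩ (T ^ n) ⁻¹' A) = μ (A ∩ (T ^ (n - m)) ⁻¹' A) := by
  have hn : T ^ n = T ^ (n - m) * T ^ m := by rw [← zpow_add, sub_add_cancel]
  rw [← (hT m).measure_preimage (hA.inter ((hT _).measurable hA)).nullMeasurableSet, hn,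
    Equiv.Perm.coe_mul, Set.preimage_comp, Set.preimage_inter]

theorem exists_sub_mem_returnTimes {ι : Type*} [LinearOrder ι]
    (hT : ∀ n : ℤ, MeasurePreserving ⇑(T ^ n) μ μ) (hA : MeasurableSet A) (s : Finset ι)
    (n : ι → ℤ) (hs : μ Set.univ < s.card * μ A) :
    ∃ i ∈ s, ∃ j ∈ s, i < j ∧ n j - n i ∈ returnTimes μ T A := by
  have hsum : μ Set.univ < ∑ i ∈ s, μ ((T ^ n i) ⁻¹' A) := by
    simpa [fun i ↦ (hT (n i)).measure_preimage hA.nullMeasurableSet] using hs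
  obtain ⟨i, hi, j, hj, hij, hpos⟩ := exists_measure_inter_pos_of_measure_univ_lt_sum_measure μ
    (fun i _ ↦ ((hT (n i)).measurable hA).nullMeasurableSet) hsum
  rcases hij.lt_or_gt with hlt | hlt
  · exact ⟨i, hi, j, hj, hlt, by rwa [measure_preimage_zpow_inter_preimage_zpow hT hA] at hpos⟩
  · exact ⟨j, hj, i, hi, hlt, by
      rwa [Set.inter_comm, measure_preimage_zpow_inter_preimage_zpow hT hA] at hpos⟩

end returnTimes

theorem ENNReal.one_lt_floor_toReal_inv_add_one_mul {a : ENNReal} (ha : 0 < a) (ha' : a ≠ ⊤) :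
    1 < ((Nat.floor a.toReal⁻¹ + 1 : ℕ) : ENNReal) * a := by
  have hpos : 0 < a.toReal := ENNReal.toReal_pos ha.ne' ha'
  have : 1 < ((Nat.floor a.toReal⁻¹ + 1 : ℕ) : ℝ) * a.toReal := by
    rw [← inv_mul_cancel₀ hpos.ne']
    exact mul_lt_mul_of_pos_right (by exact_mod_cast Nat.lt_floor_add_one _) hpos
  rwa [← ENNReal.toReal_lt_toReal ENNReal.one_ne_top (by finiteness), ENNReal.toReal_mul,
    ENNReal.toReal_natCast, ENNReal.toReal_one]

theorem returnTimes_IPrStar_general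
    {X : Type*} [MeasurableSpace X] (μ : Measure X) [IsProbabilityMeasure μ]
    (T : Equiv.Perm X)
    (hTμ : MeasurePreserving T μ μ) (hT'μ : MeasurePreserving T.symm μ μ)
    (A : Set X) (hA : MeasurableSet A) (hApos : 0 < μ A)
    (r : ℕ) (hr : r = Nat.floor (μ A).toReal⁻¹ + 1) :
    ∀ x : ℕ → ℤ, ∃ H : Finset ℕ, H.Nonempty ∧ H ⊆ Finset.Icc 1 r ∧
      (∑ t ∈ H, x t) ∈ returnTimes μ T A := by
  intro x
  have hcard : μ Set.univ < (Finset.range r).card * μ A := by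
    rw [measure_univ, Finset.card_range, hr]
    exact ENNReal.one_lt_floor_toReal_inv_add_one_mul hApos (measure_ne_top μ A)
  obtain ⟨i, -, j, hj, hij, hmem⟩ := exists_sub_mem_returnTimes
    (MeasurePreserving.perm_zpow hTμ hT'μ) hA (Finset.range r)
    (fun j ↦ ∑ t ∈ Finset.Ioc 0 j, x t) hcard
  refine ⟨Finset.Ioc i j, Finset.nonempty_Ioc.2 hij, fun t ht ↦ ?_, ?_⟩
  · simp only [Finset.mem_Ioc, Finset.mem_Icc, Finset.mem_range] at ht hj ⊢
    omega
  · rwa [← Finset.sum_Ioc_consecutive x (Nat.zero_le i) hij.le, add_sub_cancel_left] at hmem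

/-- For an invertible measure-preserving system `(X, μ, T)` and a measurable set `A`
with `μ(A) > 0`, the return times set `R(A)` is an IP_r* set for `r = ⌊1/μ(A)⌋ + 1`:
for any `x₁, …, x_r ∈ ℤ`, some nonempty `H ⊆ {1, …, r}` satisfies
`Σ_{t ∈ H} x_t ∈ R(A)`. -/
theorem returnTimes_IPrStar
    {X : Type*} [MeasurableSpace X] (μ : Measure X) [IsProbabilityMeasure μ]
    (T : Equiv.Perm X) (hT : Measurable T) (hT' : Measurable T.symm)
    (hTμ : MeasurePreserving T μ μ) (hT'μ : MeasurePreserving T.symm μ μ)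
    (A : Set X) (hA : MeasurableSet A) (hApos : 0 < μ A)
    (r : ℕ) (hr : r = Nat.floor (μ A).toReal⁻¹ + 1) :
    ∀ x : ℕ → ℤ, ∃ H : Finset ℕ, H.Nonempty ∧ H ⊆ Finset.Icc 1 r ∧
      (∑ t ∈ H, x t) ∈ returnTimes μ T A :=
  returnTimes_IPrStar_general μ T hTμ hT'μ A hA hApos r hr
end
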